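/- Let k > 0, ω ≠ 0, σ₁ ∈ ℝ with σ₁² < 2kω². Define V(x,y) = A x² + B xy + C y² with A = (k² + ω²(ω²+1) + kσ₁²/2)/(2kω² − σ₁²), B = (2k + σ₁²)/(2kω² − σ₁²), C = (ω²+1)/(2kω² − σ₁²), and let LV(x,y) = y·V_x + (−ω²x − ky)·V_y + (σ₁²x²/2)·V_yy. Then LV(x,y) = −(x² + y²) for all (x,y) ∈ ℝ². -/
import Mathlib


noncomputable def V8 (k ω σ₁ : ℝ) : ℝ → ℝ → ℝ := fun x y =>
  ((k ^ 2 + ω ^ 2 * (ω ^ 2 + 1) + k * σ₁ ^ 2 / 2) / (2 * k * ω ^ 2 - σ₁ ^ 2)) * x ^ 2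
    + ((2 * k + σ₁ ^ 2) / (2 * k * ω ^ 2 - σ₁ ^ 2)) * x * y
    + ((ω ^ 2 + 1) / (2 * k * ω ^ 2 - σ₁ ^ 2)) * y ^ 2

noncomputable def LV8 (k ω σ₁ : ℝ) (x y : ℝ) : ℝ :=
  y * deriv (fun x' => V8 k ω σ₁ x' y) x
    + (-(ω ^ 2) * x - k * y) * deriv (fun y' => V8 k ω σ₁ x y') y
    + σ₁ ^ 2 * x ^ 2 / 2 * deriv (deriv (fun y' => V8 k ω σ₁ x y')) y

lemma aux_dx (A B C y x : ℝ) :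
    deriv (fun x' => A * x' ^ 2 + B * x' * y + C * y ^ 2) x = 2 * A * x + B * y := by
  have h : HasDerivAt (fun x' => A * x' ^ 2 + B * x' * y + C * y ^ 2)
      (A * (2 * x ^ 1) + B * 1 * y + 0) x := by
    exact (((hasDerivAt_pow 2 x).const_mul A).add
      (((hasDerivAt_id x).const_mul B).mul_const y)).add (hasDerivAt_const x _)
  simpa using h.deriv.trans (by ring)

lemma aux_dy (A B C x y : ℝ) :
    deriv (fun y' => A * x ^ 2 + B * x * y' + C * y' ^ 2) y = B * x + 2 * C * y := by
  have h : HasDerivAt (fun y' => A * x ^ 2 + B * x * y' + C * y' ^ 2)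
      (0 + (B * x) * 1 + C * (2 * y ^ 1)) y := by
    exact ((hasDerivAt_const y _).add ((hasDerivAt_id y).const_mul (B * x))).add
      ((hasDerivAt_pow 2 y).const_mul C)
  simpa using h.deriv.trans (by ring)

theorem stmt_8 (k ω σ₁ : ℝ) (hk : k > 0) (hω : ω ≠ 0) (hσ : σ₁ ^ 2 < 2 * k * ω ^ 2) :
    ∀ x y : ℝ, LV8 k ω σ₁ x y = -(x ^ 2 + y ^ 2) := by
  intro x y
  set D := 2 * k * ω ^ 2 - σ₁ ^ 2 with hD
  have hDne : D ≠ 0 := by nlinarith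
  set A := (k ^ 2 + ω ^ 2 * (ω ^ 2 + 1) + k * σ₁ ^ 2 / 2) / D
  set B := (2 * k + σ₁ ^ 2) / D
  set C := (ω ^ 2 + 1) / D
  have hd2 : deriv (fun y' => V8 k ω σ₁ x y') = fun y' => B * x + 2 * C * y' := by
    funext y'
    exact aux_dy A B C x y'
  rw [LV8, hd2]
  have h3 : deriv (fun y' => B * x + 2 * C * y') y = 2 * C := by
    have h : HasDerivAt (fun y' => B * x + 2 * C * y') (0 + 2 * C * 1) y :=
      (hasDerivAt_const y _).add ((hasDerivAt_id y).const_mul (2 * C))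
    simpa using h.deriv
  rw [h3, show (fun x' => V8 k ω σ₁ x' y) = fun x' => A * x' ^ 2 + B * x' * y + C * y ^ 2 from
    rfl, aux_dx]
  show y * (2 * A * x + B * y) + (-ω ^ 2 * x - k * y) * (B * x + 2 * C * y)
      + σ₁ ^ 2 * x ^ 2 / 2 * (2 * C) = -(x ^ 2 + y ^ 2)
  simp only [A, B, C]
  field_simp
  ring
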